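/- Assume the probability setting, that f is bounded on [c, c + k̄] for some k̄ > 0, and let (h_n) be a positive sequence with h_n → 0 and n·h_n → ∞. For p, s ∈ ℕ define Λ̂_{+,p,s}(h) := (1/(nh)) Σ_{i=1}^n 1(X_i ≥ c) K((X_i − c)/h) r_p((X_i − c)/h) r_s((X_i − c)/h)' and Λ̃_{+,p,s}(h) := ∫_0^∞ K(u) r_p(u) r_s(u)' f(uh + c) du. Then Λ̂_{+,p,s}(h_n) − Λ̃_{+,p,s}(h_n) = O_P(1/√(n h_n)). -/

import Mathlib

/-!
Every entry of `Λ̂ - Λ̃` is a centred sample mean: after the substitution `x = c + u h`,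
the `(i, j)` entry of `Λ̃` is `h⁻¹ E[g(X)]` with `g(x) = 1(x ≥ c) φ((x - c)/h)` and
`φ(u) = K(u) u^i u^j`, while the entry of `Λ̂` is `(n h)⁻¹ Σ g(X_k)`. Since `K` is bounded and
supported in `[-1, 1]`, `g` is bounded by `sup K` and vanishes off `[c, c + h]`, so
`Var g(X) ≤ E g(X)² ≤ sup K² · sup f · h`. Chebyshev's inequality then bounds the probability that
an entry exceeds `t / √(n h)` by `sup K² sup f / t²`, uniformly in `n`, and a union bound over the
entries controls the Frobenius norm.
-/

open MeasureTheory ProbabilityTheory Filter Matrix Set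
open scoped Topology BigOperators

noncomputable section

namespace RDHTE

/-- Polynomial basis `r_q(u) = (1, u, …, u^q)'`. -/
def rpoly (q : ℕ) (u : ℝ) : Fin (q + 1) → ℝ := fun i => u ^ (i : ℕ)

/-- Frobenius norm of a matrix. -/
def frob {ι κ : Type*} [Fintype ι] [Fintype κ] (M : Matrix ι κ ℝ) : ℝ :=
  Real.sqrt (∑ i, ∑ j, (M i j) ^ 2)

/-- Indicator `1(c ≤ x)`. -/
def indic (c x : ℝ) : ℝ := if c ≤ x then 1 else 0

/-- A kernel: bounded nonnegative Borel function vanishing outside `[-1,1]`. -/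
def IsKernel (K : ℝ → ℝ) : Prop :=
  Measurable K ∧ (∀ u, 0 ≤ K u) ∧ (∃ C, ∀ u, K u ≤ C) ∧
    ∀ u, u ∉ Icc (-1 : ℝ) 1 → K u = 0

/-- `X` has Lebesgue density `f` under `P`. -/
def HasDensity {Ω : Type*} [MeasurableSpace Ω] (P : Measure Ω) (X : Ω → ℝ) (f : ℝ → ℝ) : Prop :=
  Measurable X ∧ Measurable f ∧ (∀ x, 0 ≤ f x) ∧
    P.map X = MeasureTheory.volume.withDensity (fun x => ENNReal.ofReal (f x))

/-- An i.i.d. sequence of random elements. -/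
def IIDseq {Ω E : Type*} [MeasurableSpace Ω] [MeasurableSpace E]
    (P : Measure Ω) (Z : ℕ → Ω → E) : Prop :=
  (∀ i, Measurable (Z i)) ∧ iIndepFun Z P ∧
    ∀ i, IdentDistrib (Z i) (Z 0) P P

/-- `Z_n = O_P(a_n)`: for every `ε > 0` there are `M > 0` and `N` with
`P(|Z_n| ≥ M a_n) ≤ ε` for all `n ≥ N`. -/
def IsBigOP {Ω : Type*} [MeasurableSpace Ω] (P : Measure Ω)
    (Z : ℕ → Ω → ℝ) (a : ℕ → ℝ) : Prop :=
  ∀ ε > (0 : ℝ), ∃ M > (0 : ℝ), ∃ N : ℕ, ∀ n ≥ N,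
    (P {ω | M * a n ≤ |Z n ω|}).toReal ≤ ε

/-- Sample Gram matrix `Λ̂_{+,p,s}(h)` built from the first `n` observations. -/
def Lamhat {Ω : Type*} [MeasurableSpace Ω] (K : ℝ → ℝ) (c : ℝ) (X : ℕ → Ω → ℝ)
    (p s : ℕ) (n : ℕ) (h : ℝ) (ω : Ω) : Matrix (Fin (p + 1)) (Fin (s + 1)) ℝ :=
  Matrix.of fun i j => (1 / (n * h)) * ∑ k ∈ Finset.range n,
    indic c (X k ω) * K ((X k ω - c) / h) *
      (rpoly p ((X k ω - c) / h) i * rpoly s ((X k ω - c) / h) j)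

/-- Population counterpart `Λ̃_{+,p,s}(h)`. -/
def Lamtilde (K f : ℝ → ℝ) (c : ℝ) (p s : ℕ) (h : ℝ) :
    Matrix (Fin (p + 1)) (Fin (s + 1)) ℝ :=
  Matrix.of fun i j => ∫ u in Ioi (0 : ℝ), K u * (rpoly p u i * rpoly s u j) * f (u * h + c)

section Frobenius

variable {ι κ : Type*} [Fintype ι] [Fintype κ]

lemma frob_nonneg (M : Matrix ι κ ℝ) : 0 ≤ frob M :=
  Real.sqrt_nonneg _

lemma frob_lt_of_forall_abs_lt [Nonempty ι] [Nonempty κ] {M : Matrix ι κ ℝ} {t : ℝ}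
    (hM : ∀ i j, |M i j| < t / Real.sqrt (Fintype.card ι * Fintype.card κ)) :
    frob M < t := by
  set N : ℝ := Fintype.card ι * Fintype.card κ
  have hN : 0 < N := by positivity
  have ht : 0 < t / Real.sqrt N :=
    (abs_nonneg _).trans_lt (hM (Classical.arbitrary ι) (Classical.arbitrary κ))
  have hsum : ∑ i, ∑ j, M i j ^ 2 < ∑ _i : ι, ∑ _j : κ, (t / Real.sqrt N) ^ 2 :=
    Finset.sum_lt_sum_of_nonempty Finset.univ_nonempty fun i _ =>
      Finset.sum_lt_sum_of_nonempty Finset.univ_nonempty fun j _ => by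
        simpa only [sq_abs] using pow_lt_pow_left₀ (hM i j) (abs_nonneg _) two_ne_zero
  have hconst : ∑ _i : ι, ∑ _j : κ, (t / Real.sqrt N) ^ 2 = t ^ 2 := by
    simp only [Finset.sum_const, Finset.card_univ, nsmul_eq_mul, div_pow,
      Real.sq_sqrt hN.le, N]
    field_simp
  have hnonneg : 0 ≤ ∑ i, ∑ j, M i j ^ 2 :=
    Finset.sum_nonneg fun i _ => Finset.sum_nonneg fun j _ => sq_nonneg _
  calc frob M < Real.sqrt (t ^ 2) := Real.sqrt_lt_sqrt hnonneg (hconst ▸ hsum)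
    _ = t := Real.sqrt_sq ((div_pos_iff_of_pos_right (Real.sqrt_pos.2 hN)).1 ht).le

lemma measure_le_frob_le_sum {Ω : Type*} [MeasurableSpace Ω] [Nonempty ι] [Nonempty κ]
    (μ : Measure Ω) (D : Ω → Matrix ι κ ℝ) (t : ℝ) :
    μ {ω | t ≤ frob (D ω)} ≤
      ∑ i, ∑ j, μ {ω | t / Real.sqrt (Fintype.card ι * Fintype.card κ) ≤ |D ω i j|} := by
  calc μ {ω | t ≤ frob (D ω)}
      ≤ μ (⋃ i, ⋃ j, {ω | t / Real.sqrt (Fintype.card ι * Fintype.card κ) ≤ |D ω i j|}) := by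
        refine measure_mono fun ω hω => ?_
        by_contra hlt
        simp only [mem_iUnion, mem_ofPred_eq, not_exists, not_le] at hlt
        exact (frob_lt_of_forall_abs_lt hlt).not_ge hω
    _ ≤ _ := (measure_iUnion_fintype_le _ _).trans
        (Finset.sum_le_sum fun i _ => measure_iUnion_fintype_le _ _)

lemma measure_mul_le_frob_le {Ω : Type*} [MeasurableSpace Ω] [Nonempty ι] [Nonempty κ]
    (μ : Measure Ω) (D : Ω → Matrix ι κ ℝ) {a B : ℝ}
    (hD : ∀ i j, ∀ t > 0, μ {ω | t * a ≤ |D ω i j|} ≤ ENNReal.ofReal (B / t ^ 2))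
    {M : ℝ} (hM : 0 < M) :
    μ {ω | M * a ≤ frob (D ω)} ≤
      ENNReal.ofReal ((Fintype.card ι * Fintype.card κ) ^ 2 * B / M ^ 2) := by
  set N : ℝ := Fintype.card ι * Fintype.card κ
  have hN : 0 < N := by positivity
  calc μ {ω | M * a ≤ frob (D ω)}
      ≤ ∑ i, ∑ j, μ {ω | M / Real.sqrt N * a ≤ |D ω i j|} := by
        simpa only [div_mul_eq_mul_div] using measure_le_frob_le_sum μ D (M * a)
    _ ≤ ∑ _i : ι, ∑ _j : κ, ENNReal.ofReal (B / (M / Real.sqrt N) ^ 2) := by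
        gcongr with i j
        exact hD i j _ (by positivity)
    _ = ENNReal.ofReal (N ^ 2 * B / M ^ 2) := by
        simp only [Finset.sum_const, Finset.card_univ, nsmul_eq_mul]
        rw [← mul_assoc, ← Nat.cast_mul, ← ENNReal.ofReal_natCast,
          ← ENNReal.ofReal_mul (by positivity), div_pow, Real.sq_sqrt hN.le]
        congr 1
        push_cast [N]
        field_simp

end Frobenius

section Probability

variable {Ω : Type*} [MeasurableSpace Ω] {P : Measure Ω}

lemma IIDseq.comp {E F : Type*} [MeasurableSpace E] [MeasurableSpace F] {Z : ℕ → Ω → E}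
    (hZ : IIDseq P Z) {g : E → F} (hg : Measurable g) : IIDseq P fun i => g ∘ Z i :=
  ⟨fun i => hg.comp (hZ.1 i), hZ.2.1.comp (fun _ => g) fun _ => hg,
    fun i => (hZ.2.2 i).comp hg⟩

lemma IIDseq.meas_ge_abs_sum_sub_le [IsFiniteMeasure P] {Z : ℕ → Ω → ℝ} (hZ : IIDseq P Z)
    (hZ2 : MemLp (Z 0) 2 P) (n : ℕ) {t : ℝ} (ht : 0 < t) :
    P {ω | t ≤ |∑ k ∈ Finset.range n, Z k ω - n * P[Z 0]|} ≤
      ENNReal.ofReal (n * Var[Z 0; P] / t ^ 2) := by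
  have hZk : ∀ k, MemLp (Z k) 2 P := fun k => (hZ.2.2 k).symm.memLp_snd hZ2
  have hmean : ∫ ω, ∑ k ∈ Finset.range n, Z k ω ∂P = n * P[Z 0] := by
    rw [integral_finsetSum _ fun k _ => (hZk k).integrable one_le_two]
    simp [(hZ.2.2 _).integral_eq]
  have hvar : variance (∑ k ∈ Finset.range n, Z k) P = n * Var[Z 0; P] := by
    rw [IndepFun.variance_sum (fun k _ => hZk k) fun k _ l _ hkl => hZ.2.1.indepFun hkl]
    simp [(hZ.2.2 _).variance_eq]
  simpa [hmean, hvar] using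
    meas_ge_le_variance_div_sq (memLp_finsetSum' (Finset.range n) fun k _ => hZk k) ht

lemma HasDensity.integral_comp {X : Ω → ℝ} {f : ℝ → ℝ} (hf : HasDensity P X f) {φ : ℝ → ℝ}
    (hφ : Measurable φ) : ∫ ω, φ (X ω) ∂P = ∫ x, f x * φ x := by
  obtain ⟨hX, hfm, hf0, hmap⟩ := hf
  rw [← integral_map hX.aemeasurable hφ.aestronglyMeasurable, hmap,
    integral_withDensity_eq_integral_toReal_smul hfm.ennreal_ofReal
      (ae_of_all _ fun _ => ENNReal.ofReal_lt_top)]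
  simp [ENNReal.toReal_ofReal (hf0 _)]

lemma HasDensity.integral_sq_comp_le {X : Ω → ℝ} {f : ℝ → ℝ} (hf : HasDensity P X f)
    {g : ℝ → ℝ} (hg : Measurable g) {a b C Cf : ℝ} (hab : a ≤ b) (hgC : ∀ x, |g x| ≤ C)
    (hg0 : ∀ x ∉ Icc a b, g x = 0) (hfb : ∀ x ∈ Icc a b, f x ≤ Cf) :
    P[fun ω => g (X ω) ^ 2] ≤ Cf * C ^ 2 * (b - a) := by
  have hpt : ∀ x, f x * g x ^ 2 ≤ (Icc a b).indicator (fun _ => Cf * C ^ 2) x := by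
    intro x
    by_cases hx : x ∈ Icc a b
    · have hg2 : g x ^ 2 ≤ C ^ 2 := by
        rw [← sq_abs]; exact pow_le_pow_left₀ (abs_nonneg _) (hgC x) 2
      rw [indicator_of_mem hx]
      exact mul_le_mul (hfb x hx) hg2 (sq_nonneg _) ((hf.2.2.1 x).trans (hfb x hx))
    · simp [hx, hg0 x hx]
  calc P[fun ω => g (X ω) ^ 2] = ∫ x, f x * g x ^ 2 := hf.integral_comp (hg.pow_const 2)
    _ ≤ ∫ x, (Icc a b).indicator (fun _ => Cf * C ^ 2) x :=
      integral_mono_of_nonneg (ae_of_all _ fun x => mul_nonneg (hf.2.2.1 x) (sq_nonneg _))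
        ((integrableOn_const measure_Icc_lt_top.ne).integrable_indicator measurableSet_Icc)
        (ae_of_all _ hpt)
    _ = Cf * C ^ 2 * (b - a) := by
      simp [integral_indicator_const _ measurableSet_Icc, hab, mul_comm]

end Probability

lemma measurable_indic (c : ℝ) : Measurable (indic c) :=
  Measurable.ite measurableSet_Ici measurable_const measurable_const

lemma abs_indic_mul_le {φ : ℝ → ℝ} {C : ℝ} (hφ : ∀ u, |φ u| ≤ C) (c x u : ℝ) :
    |indic c x * φ u| ≤ C := by
  unfold indic
  split_ifs
  · simpa using hφ u
  · simpa using (abs_nonneg _).trans (hφ u)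

lemma indic_mul_comp_eq_zero {φ : ℝ → ℝ} (hφ : ∀ u, 1 < u → φ u = 0) {c h x : ℝ} (hh : 0 < h)
    (hx : x ∉ Icc c (c + h)) : indic c x * φ ((x - c) / h) = 0 := by
  unfold indic
  split_ifs with hc
  · rw [hφ _ ((lt_div_iff₀ hh).2 ?_), mul_zero]
    simp only [mem_Icc, hc, true_and, not_le] at hx
    linarith
  · exact zero_mul _

lemma setIntegral_Ioi_mul_comp_eq (φ f : ℝ → ℝ) (c : ℝ) {h : ℝ} (hh : 0 < h) :
    ∫ u in Ioi 0, φ u * f (u * h + c) = h⁻¹ * ∫ x, f x * (indic c x * φ ((x - c) / h)) := by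
  set G : ℝ → ℝ := (Ici 0).indicator fun u => φ u * f (u * h + c)
  have hG : ∀ x, f x * (indic c x * φ ((x - c) / h)) = G ((x - c) / h) := by
    intro x
    have hx : (x - c) / h * h + c = x := by field_simp; ring
    have hc : 0 ≤ (x - c) / h ↔ c ≤ x := by rw [le_div_iff₀ hh, zero_mul, sub_nonneg]
    by_cases hcx : c ≤ x
    · simp only [G, indic, if_pos hcx, indicator_of_mem (mem_Ici.2 (hc.2 hcx)), hx]
      ring
    · simp [G, indic, hcx, mt hc.1 hcx]
  calc ∫ u in Ioi 0, φ u * f (u * h + c) = ∫ u, G u := by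
        rw [integral_indicator measurableSet_Ici, integral_Ici_eq_integral_Ioi]
    _ = h⁻¹ * ∫ x, G ((x - c) / h) := by
        rw [integral_sub_right_eq_self (fun x => G (x / h)), Measure.integral_comp_div,
          abs_of_pos hh, smul_eq_mul, inv_mul_cancel_left₀ hh.ne']
    _ = h⁻¹ * ∫ x, f x * (indic c x * φ ((x - c) / h)) := by simp only [hG]

lemma meas_ge_abs_oneSidedAverage_sub_le {Ω : Type*} [MeasurableSpace Ω] {P : Measure Ω}
    [IsProbabilityMeasure P] {X : ℕ → Ω → ℝ} (hX : IIDseq P X) {f : ℝ → ℝ}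
    (hf : HasDensity P (X 0) f) {c h Cf C : ℝ} (hh : 0 < h) (hfb : ∀ x ∈ Icc c (c + h), f x ≤ Cf)
    {φ : ℝ → ℝ} (hφm : Measurable φ) (hφC : ∀ u, |φ u| ≤ C) (hφ1 : ∀ u, 1 < u → φ u = 0)
    {n : ℕ} (hn : 0 < n) {t : ℝ} (ht : 0 < t) :
    P {ω | t * (1 / Real.sqrt (n * h)) ≤
        |1 / (n * h) * ∑ k ∈ Finset.range n, indic c (X k ω) * φ ((X k ω - c) / h) -
          ∫ u in Ioi 0, φ u * f (u * h + c)|} ≤ ENNReal.ofReal (Cf * C ^ 2 / t ^ 2) := by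
  set g : ℝ → ℝ := fun x => indic c x * φ ((x - c) / h)
  have hgm : Measurable g := (measurable_indic c).mul (hφm.comp (by fun_prop))
  have hZ : IIDseq P fun k => g ∘ X k := hX.comp hgm
  have hZ2 : MemLp (g ∘ X 0) 2 P :=
    MemLp.of_bound (hZ.1 0).aestronglyMeasurable C
      (ae_of_all _ fun ω => abs_indic_mul_le hφC c _ _)
  have hvar : Var[g ∘ X 0; P] ≤ Cf * C ^ 2 * h := by
    refine (variance_le_expectation_sq (hZ.1 0).aestronglyMeasurable).trans ?_
    simpa using hf.integral_sq_comp_le hgm (le_add_of_nonneg_right hh.le)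
      (fun x => abs_indic_mul_le hφC c x _) (fun x hx => indic_mul_comp_eq_zero hφ1 hh hx) hfb
  have hnh : (0 : ℝ) < n * h := by positivity
  have hevent : ∀ ω, (t * (1 / Real.sqrt (n * h)) ≤ |1 / (n * h) * ∑ k ∈ Finset.range n,
      g (X k ω) - ∫ u in Ioi 0, φ u * f (u * h + c)|) ↔
        t * Real.sqrt (n * h) ≤ |∑ k ∈ Finset.range n, (g ∘ X k) ω - n * P[g ∘ X 0]| := by
    intro ω
    have hrw : 1 / (n * h) * ∑ k ∈ Finset.range n, g (X k ω) - h⁻¹ * P[g ∘ X 0] =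
        (∑ k ∈ Finset.range n, g (X k ω) - n * P[g ∘ X 0]) / (n * h) := by
      field_simp
    rw [setIntegral_Ioi_mul_comp_eq φ f c hh, ← hf.integral_comp hgm]
    simp only [Function.comp_apply] at hrw ⊢
    rw [hrw, abs_div, abs_of_pos hnh, le_div_iff₀ hnh, mul_assoc, one_div_mul_eq_div,
      Real.div_sqrt]
  calc P {ω | t * (1 / Real.sqrt (n * h)) ≤ |1 / (n * h) * ∑ k ∈ Finset.range n, g (X k ω) -
        ∫ u in Ioi 0, φ u * f (u * h + c)|}
      = P {ω | t * Real.sqrt (n * h) ≤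
          |∑ k ∈ Finset.range n, (g ∘ X k) ω - n * P[g ∘ X 0]|} := by
        simp only [hevent]
    _ ≤ ENNReal.ofReal (n * Var[g ∘ X 0; P] / (t * Real.sqrt (n * h)) ^ 2) :=
        hZ.meas_ge_abs_sum_sub_le hZ2 n (by positivity)
    _ ≤ ENNReal.ofReal (Cf * C ^ 2 / t ^ 2) := by
        refine ENNReal.ofReal_le_ofReal ?_
        rw [mul_pow, Real.sq_sqrt hnh.le]
        calc n * Var[g ∘ X 0; P] / (t ^ 2 * (n * h))
            ≤ n * (Cf * C ^ 2 * h) / (t ^ 2 * (n * h)) := by gcongr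
          _ = Cf * C ^ 2 / t ^ 2 := by field_simp

section Kernel

variable {K : ℝ → ℝ} (hK : IsKernel K) {p s : ℕ} (i : Fin (p + 1)) (j : Fin (s + 1))
include hK

lemma IsKernel.measurable_mul_rpoly : Measurable fun u => K u * (rpoly p u i * rpoly s u j) :=
  hK.1.mul (by simp only [rpoly]; fun_prop)

lemma IsKernel.abs_mul_rpoly_le {CK : ℝ} (hCK : ∀ u, K u ≤ CK) (u : ℝ) :
    |K u * (rpoly p u i * rpoly s u j)| ≤ CK := by
  by_cases hu : u ∈ Icc (-1 : ℝ) 1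
  · have hu1 : |u| ≤ 1 := abs_le.2 hu
    have hr : |rpoly p u i * rpoly s u j| ≤ 1 := by
      simp only [rpoly, abs_mul, abs_pow]
      exact mul_le_one₀ (pow_le_one₀ (abs_nonneg _) hu1) (by positivity)
        (pow_le_one₀ (abs_nonneg _) hu1)
    rw [abs_mul, abs_of_nonneg (hK.2.1 u)]
    exact (mul_le_of_le_one_right (hK.2.1 u) hr).trans (hCK u)
  · rw [hK.2.2.2 u hu, zero_mul, abs_zero]
    exact (hK.2.1 u).trans (hCK u)

lemma IsKernel.mul_rpoly_eq_zero_of_one_lt {u : ℝ} (hu : 1 < u) :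
    K u * (rpoly p u i * rpoly s u j) = 0 := by
  rw [hK.2.2.2 u fun hmem => hu.not_ge hmem.2, zero_mul]

end Kernel

lemma isBigOP_of_tail_le {Ω : Type*} [MeasurableSpace Ω] {P : Measure Ω} {Z : ℕ → Ω → ℝ}
    {a : ℕ → ℝ} (B : ℝ)
    (hZ : ∀ M > (0 : ℝ), ∀ᶠ n in atTop, P {ω | M * a n ≤ |Z n ω|} ≤ ENNReal.ofReal (B / M ^ 2)) :
    IsBigOP P Z a := by
  intro ε hε
  set M := Real.sqrt (|B| / ε + 1)
  have hM : 0 < M := Real.sqrt_pos.2 (by positivity)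
  have hBM : B / M ^ 2 ≤ ε := by
    rw [Real.sq_sqrt (by positivity), div_le_iff₀ (by positivity), mul_add, mul_one,
      mul_div_cancel₀ _ hε.ne']
    linarith [le_abs_self B]
  obtain ⟨N, hN⟩ := eventually_atTop.1 (hZ M hM)
  exact ⟨M, hM, N, fun n hn =>
    ENNReal.toReal_le_of_le_ofReal hε.le ((hN n hn).trans (ENNReal.ofReal_le_ofReal hBM))⟩

theorem stmt3_general
    {Ω : Type*} [MeasurableSpace Ω] (P : Measure Ω) [IsProbabilityMeasure P]
    (d : ℕ)
    (Y X : ℕ → Ω → ℝ) (W : ℕ → Ω → Fin d → ℝ)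
    (hiid : IIDseq P (fun i ω => (Y i ω, X i ω, W i ω)))
    (c : ℝ) (f : ℝ → ℝ) (hf : HasDensity P (X 0) f)
    (kbar : ℝ) (hkbar : 0 < kbar) (hfb : ∃ C, ∀ x ∈ Icc c (c + kbar), f x ≤ C)
    (K : ℝ → ℝ) (hK : IsKernel K)
    (p s : ℕ)
    (h : ℕ → ℝ) (hpos : ∀ n, 0 < h n)
    (h0 : Tendsto h atTop (𝓝 0))
    (hnh : Tendsto (fun n : ℕ => (n : ℝ) * h n) atTop atTop) :
    IsBigOP P
      (fun n ω => frob (Lamhat K c X p s n (h n) ω - Lamtilde K f c p s (h n)))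
      (fun n => 1 / Real.sqrt ((n : ℝ) * h n)) := by
  obtain ⟨CK, hCK⟩ := hK.2.2.1
  obtain ⟨Cf, hCf⟩ := hfb
  have hX : IIDseq P X := hiid.comp (measurable_fst.comp measurable_snd)
  refine isBigOP_of_tail_le
    ((Fintype.card (Fin (p + 1)) * Fintype.card (Fin (s + 1)) : ℝ) ^ 2 * (Cf * CK ^ 2))
    fun M hM => ?_
  filter_upwards [h0.eventually_lt_const hkbar, hnh.eventually_gt_atTop 0] with n hhk hnh0
  have hn : 0 < n := by exact_mod_cast pos_of_mul_pos_left hnh0 (hpos n).le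
  simp only [abs_of_nonneg (frob_nonneg _)]
  refine measure_mul_le_frob_le P _ (fun i j t ht => ?_) hM
  simpa only [Lamhat, Lamtilde, Matrix.sub_apply, Matrix.of_apply, mul_assoc] using
    meas_ge_abs_oneSidedAverage_sub_le hX hf (hpos n) (fun x hx => hCf x ⟨hx.1, hx.2.trans (by linarith)⟩)
      (hK.measurable_mul_rpoly i j) (hK.abs_mul_rpoly_le i j hCK)
      (fun u => hK.mul_rpoly_eq_zero_of_one_lt i j) hn ht

/-- Under the probability setting, if `f` is bounded on `[c, c + k̄]`
for some `k̄ > 0`, `h_n → 0` and `n h_n → ∞`, then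
`Λ̂_{+,p,s}(h_n) − Λ̃_{+,p,s}(h_n) = O_P(1/√(n h_n))`. -/
theorem stmt3
    {Ω : Type*} [MeasurableSpace Ω] (P : Measure Ω) [IsProbabilityMeasure P]
    (d : ℕ) (hd : 1 ≤ d)
    (Y X : ℕ → Ω → ℝ) (W : ℕ → Ω → Fin d → ℝ)
    (hiid : IIDseq P (fun i ω => (Y i ω, X i ω, W i ω)))
    (c : ℝ) (f : ℝ → ℝ) (hf : HasDensity P (X 0) f)
    (kbar : ℝ) (hkbar : 0 < kbar) (hfb : ∃ C, ∀ x ∈ Icc c (c + kbar), f x ≤ C)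
    (K : ℝ → ℝ) (hK : IsKernel K)
    (p s : ℕ)
    (h : ℕ → ℝ) (hpos : ∀ n, 0 < h n)
    (h0 : Tendsto h atTop (𝓝 0))
    (hnh : Tendsto (fun n : ℕ => (n : ℝ) * h n) atTop atTop) :
    IsBigOP P
      (fun n ω => frob (Lamhat K c X p s n (h n) ω - Lamtilde K f c p s (h n)))
      (fun n => 1 / Real.sqrt ((n : ℝ) * h n)) :=
  stmt3_general P d Y X W hiid c f hf kbar hkbar hfb K hK p s h hpos h0 hnh

end RDHTE
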